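/- For each n ≥ 1 let a_n > 0 be a scaling factor, let π_n be a probability distribution on W(n), and let ρ̃_n be the probability distribution on P(n) defined by ρ̃_n(λ) = ∑_{α ∈ W(n) : ord α = λ} π_n(α) (the pushforward of π_n under ord). Let φ : [0,∞) → [0,∞) be a right-continuous, weakly decreasing function with φ(x) → 0 as x → ∞. If for every ε > 0 one has π_n{α ∈ W(n) : |∂̃^{a_n}α(x) − φ(x)| < ε for all x > 0} → 1 as n → ∞, then for every ε > 0 one has ρ̃_n{λ ∈ P(n) : |∂̃^{a_n}λ(x) − φ(x)| < ε for all x > 0} → 1 as n → ∞. -/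

import Mathlib

/-!
Sorting the parts of a weak composition `α` into weakly decreasing order cannot spoil uniform
closeness of its boundary to a decreasing `φ`: the `i`-th largest part is at least some `α j` with
`j ≤ i` and at most some `α j` with `j ≥ i`, and since `φ` is decreasing the `ε`-bounds at those
positions carry over to position `i`. So `ord` maps the good weak compositions into the preimage of
the good partitions, whence `ρ̃ₙ(good) ≥ πₙ(good) → 1`, while `ρ̃ₙ(good) ≤ 1`.
-/

open Filter

/-- α is a weak composition of n. -/
def IsWeakComp (n : ℕ) (α : ℕ →₀ ℕ) : Prop :=
  ∑ i ∈ α.support, α i = n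

/-- λ is a partition of n: a weakly decreasing weak composition of n. -/
def IsPartition (n : ℕ) (lam : ℕ →₀ ℕ) : Prop :=
  IsWeakComp n lam ∧ ∀ i j : ℕ, i ≤ j → lam j ≤ lam i

/-- `ord α` is the weakly decreasing rearrangement of the parts of α. -/
def ord (α : ℕ →₀ ℕ) : ℕ → ℕ :=
  fun i => ((α.support.val.map ⇑α).sort (· ≤ ·)).reverse.getD i 0

/-- The rescaled diagram-boundary function `∂̃ᵃα(x) = (a/n)·α_{⌊x·a⌋+1}`. -/
noncomputable def rescaledBdry (n : ℕ) (a : ℝ) (α : ℕ → ℕ) (x : ℝ) : ℝ :=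
  (a / (n : ℝ)) * (α ⌊x * a⌋₊ : ℝ)

open scoped ENNReal

lemma List.antitone_getD_of_pairwise {l : List ℕ} (hl : l.Pairwise (· ≥ ·)) :
    Antitone (l.getD · 0) := by
  intro i j hij
  rcases lt_or_ge j l.length with hj | hj
  · simp only [List.getD_eq_getElem _ _ hj, List.getD_eq_getElem _ _ (hij.trans_lt hj)]
    rcases hij.eq_or_lt with rfl | hlt
    · rfl
    · exact List.pairwise_iff_getElem.1 hl i j _ hj hlt
  · simp only [List.getD_eq_default _ _ hj, zero_le]

lemma List.map_getD_range (l : List ℕ) : (List.range l.length).map (l.getD · 0) = l :=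
  List.ext_getElem (by simp) fun i _ hi => by
    simp only [List.getElem_map, List.getElem_range, List.getD_eq_getElem _ _ hi]

def parts (α : ℕ →₀ ℕ) : Multiset ℕ := α.support.val.map α

lemma List.parts_toFinsupp {l : List ℕ} (hl : 0 ∉ l) : parts l.toFinsupp = l := by
  have hsupp : l.toFinsupp.support = Finset.range l.length := by
    refine Finset.filter_true_of_mem fun i hi => ?_
    rw [List.getD_eq_getElem _ _ (Finset.mem_range.1 hi)]
    exact fun h0 => hl (h0 ▸ List.getElem_mem _)
  rw [parts, hsupp, List.coe_toFinsupp, Finset.range_val, Multiset.range, Multiset.map_coe,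
    List.map_getD_range]

lemma zero_notMem_parts (α : ℕ →₀ ℕ) : 0 ∉ parts α := by
  simp [parts]

lemma isWeakComp_iff_sum_parts {n : ℕ} {α : ℕ →₀ ℕ} : IsWeakComp n α ↔ (parts α).sum = n := by
  rw [IsWeakComp, Finset.sum_eq_multiset_sum, parts]

lemma card_filter_support_eq_card_filter_parts (α : ℕ →₀ ℕ) (p : ℕ → Prop) [DecidablePred p] :
    (α.support.filter (p ∘ α)).card = ((parts α).filter p).card := by
  rw [parts, Multiset.filter_map, Multiset.card_map]
  rfl

def sortedParts (α : ℕ →₀ ℕ) : List ℕ := ((parts α).sort (· ≤ ·)).reverse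

lemma coe_sortedParts (α : ℕ →₀ ℕ) : (sortedParts α : Multiset ℕ) = parts α := by
  rw [sortedParts, Multiset.coe_reverse, Multiset.sort_eq]

lemma sortedParts_pairwise (α : ℕ →₀ ℕ) : (sortedParts α).Pairwise (· ≥ ·) :=
  List.pairwise_reverse.2 (Multiset.pairwise_sort _ _)

def ordFinsupp (α : ℕ →₀ ℕ) : ℕ →₀ ℕ := (sortedParts α).toFinsupp

lemma coe_ordFinsupp (α : ℕ →₀ ℕ) : ⇑(ordFinsupp α) = ord α := rfl

lemma parts_ordFinsupp (α : ℕ →₀ ℕ) : parts (ordFinsupp α) = parts α := by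
  rw [ordFinsupp, List.parts_toFinsupp, coe_sortedParts]
  rw [← Multiset.mem_coe, coe_sortedParts]
  exact zero_notMem_parts α

lemma antitone_ord (α : ℕ →₀ ℕ) : Antitone (ord α) :=
  List.antitone_getD_of_pairwise (sortedParts_pairwise α)

lemma isPartition_ordFinsupp {n : ℕ} {α : ℕ →₀ ℕ} (hα : IsWeakComp n α) :
    IsPartition n (ordFinsupp α) := by
  refine ⟨?_, fun i j hij => antitone_ord α hij⟩
  rwa [isWeakComp_iff_sum_parts, parts_ordFinsupp, ← isWeakComp_iff_sum_parts]

section Rearrangement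

variable {α β : ℕ →₀ ℕ}

lemma card_filter_support_eq_of_parts_eq (h : parts β = parts α) (p : ℕ → Prop)
    [DecidablePred p] : (β.support.filter (p ∘ β)).card = (α.support.filter (p ∘ α)).card := by
  rw [card_filter_support_eq_card_filter_parts, card_filter_support_eq_card_filter_parts, h]

lemma exists_le_apply_le_of_parts_eq (h : parts β = parts α) (hβ : Antitone β) (i : ℕ) :
    ∃ j ≤ i, α j ≤ β i := by
  by_contra! hlt
  have hα : i + 1 ≤ (α.support.filter ((β i < ·) ∘ α)).card := by
    refine (Finset.card_range _).symm.le.trans (Finset.card_le_card fun j hj => ?_)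
    have hβα := hlt j (Nat.lt_succ_iff.1 (Finset.mem_range.1 hj))
    simp only [Finset.mem_filter, Finsupp.mem_support_iff, Function.comp_apply]
    exact ⟨by omega, hβα⟩
  have hβ' : (β.support.filter ((β i < ·) ∘ β)).card ≤ i := by
    refine (Finset.card_le_card fun k hk => ?_).trans (Finset.card_range i).le
    simp only [Finset.mem_filter, Function.comp_apply] at hk
    exact Finset.mem_range.2 (lt_of_not_ge fun hik => hk.2.not_ge (hβ hik))
  rw [card_filter_support_eq_of_parts_eq h] at hβ'
  omega

lemma exists_ge_apply_ge_of_parts_eq (h : parts β = parts α) (hβ : Antitone β) (i : ℕ) :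
    ∃ j ≥ i, β i ≤ α j := by
  rcases Nat.eq_zero_or_pos (β i) with h0 | hpos
  · exact ⟨i, le_rfl, h0 ▸ Nat.zero_le _⟩
  by_contra! hlt
  have hβ' : i + 1 ≤ (β.support.filter ((β i ≤ ·) ∘ β)).card := by
    refine (Finset.card_range _).symm.le.trans (Finset.card_le_card fun k hk => ?_)
    have hβk := hβ (Nat.lt_succ_iff.1 (Finset.mem_range.1 hk))
    simp only [Finset.mem_filter, Finsupp.mem_support_iff, Function.comp_apply]
    exact ⟨by omega, hβk⟩
  have hα : (α.support.filter ((β i ≤ ·) ∘ α)).card ≤ i := by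
    refine (Finset.card_le_card fun j hj => ?_).trans (Finset.card_range i).le
    simp only [Finset.mem_filter, Function.comp_apply] at hj
    exact Finset.mem_range.2 (lt_of_not_ge fun hij => (hlt j hij).not_ge hj.2)
  rw [card_filter_support_eq_of_parts_eq h] at hβ'
  omega

end Rearrangement

section Boundary

variable {a x : ℝ} {j : ℕ}

lemma exists_pos_le_floor_mul_eq (ha : 0 < a) (hx : 0 < x) (hj : j ≤ ⌊x * a⌋₊) :
    ∃ y, 0 < y ∧ y ≤ x ∧ ⌊y * a⌋₊ = j := by
  have hjx : (j : ℝ) ≤ x * a := (Nat.cast_le.2 hj).trans (Nat.floor_le (by positivity))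
  refine ⟨min x ((j + 2⁻¹) / a), by positivity, min_le_left _ _, ?_⟩
  rw [min_mul_of_nonneg _ _ ha.le, div_mul_cancel₀ _ ha.ne', Nat.floor_eq_iff (by positivity)]
  exact ⟨le_min hjx (by linarith), (min_le_right _ _).trans_lt (by linarith)⟩

lemma exists_ge_floor_mul_eq (ha : 0 < a) (hj : ⌊x * a⌋₊ ≤ j) :
    ∃ y, x ≤ y ∧ ⌊y * a⌋₊ = j := by
  have hxj : x * a < j + 1 :=
    (Nat.lt_floor_add_one _).trans_le (by exact_mod_cast Nat.succ_le_succ hj)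
  refine ⟨max x (j / a), le_max_left _ _, ?_⟩
  rw [max_mul_of_nonneg _ _ ha.le, div_mul_cancel₀ _ ha.ne', Nat.floor_eq_iff (by positivity)]
  exact ⟨le_max_right _ _, max_lt hxj (by linarith)⟩

end Boundary

def BdryApprox (n : ℕ) (a : ℝ) (φ : ℝ → ℝ) (ε : ℝ) (α : ℕ → ℕ) : Prop :=
  ∀ x : ℝ, 0 < x → |rescaledBdry n a α x - φ x| < ε

namespace BdryApprox

variable {n : ℕ} {a ε : ℝ} {φ : ℝ → ℝ}

lemma of_sandwich {α β : ℕ → ℕ} (ha : 0 < a) (hφ : AntitoneOn φ (Set.Ioi 0))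
    (hα : BdryApprox n a φ ε α) (hle : ∀ i, ∃ j ≤ i, α j ≤ β i) (hge : ∀ i, ∃ j ≥ i, β i ≤ α j) :
    BdryApprox n a φ ε β := by
  intro x hx
  have hc : 0 ≤ a / n := by positivity
  obtain ⟨j, hji, hj⟩ := hle ⌊x * a⌋₊
  obtain ⟨y, hy, hyx, rfl⟩ := exists_pos_le_floor_mul_eq ha hx hji
  obtain ⟨k, hki, hk⟩ := hge ⌊x * a⌋₊
  obtain ⟨z, hxz, rfl⟩ := exists_ge_floor_mul_eq ha hki
  have hz : 0 < z := hx.trans_le hxz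
  have lower := (abs_lt.1 (hα y hy)).1
  have upper := (abs_lt.1 (hα z hz)).2
  have hφy := hφ hy hx hyx
  have hφz := hφ hx hz hxz
  unfold rescaledBdry at *
  have hαβ := mul_le_mul_of_nonneg_left (Nat.cast_le (α := ℝ).2 hj) hc
  have hβα := mul_le_mul_of_nonneg_left (Nat.cast_le (α := ℝ).2 hk) hc
  rw [abs_lt]
  constructor <;> linarith

lemma ord (ha : 0 < a) (hφ : AntitoneOn φ (Set.Ioi 0)) {α : ℕ →₀ ℕ}
    (hα : BdryApprox n a φ ε α) : BdryApprox n a φ ε (_root_.ord α) := by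
  rw [← coe_ordFinsupp]
  exact hα.of_sandwich ha hφ
    (exists_le_apply_le_of_parts_eq (parts_ordFinsupp α) (antitone_ord α))
    (exists_ge_apply_ge_of_parts_eq (parts_ordFinsupp α) (antitone_ord α))

end BdryApprox

lemma ordFinsupp_eq_iff {α lam : ℕ →₀ ℕ} : ordFinsupp α = lam ↔ ord α = ⇑lam := by
  rw [← coe_ordFinsupp, DFunLike.coe_fn_eq]

lemma tsum_isPartition_eq_tsum_isWeakComp {n : ℕ} {π ρ : (ℕ →₀ ℕ) → ℝ≥0∞}
    (hρ : ∀ lam, IsPartition n lam →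
      ρ lam = ∑' α : {α : ℕ →₀ ℕ // IsWeakComp n α ∧ ord α = ⇑lam}, π α)
    (P : (ℕ →₀ ℕ) → Prop) :
    ∑' lam : {lam : ℕ →₀ ℕ // IsPartition n lam ∧ P lam}, ρ lam
      = ∑' α : {α : ℕ →₀ ℕ // IsWeakComp n α ∧ P (ordFinsupp α)}, π α := by
  set fiber : (ℕ →₀ ℕ) → Set (ℕ →₀ ℕ) := fun lam => {α | IsWeakComp n α ∧ ord α = ⇑lam}
  have hdisj : Set.PairwiseDisjoint {lam | IsPartition n lam ∧ P lam} fiber :=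
    fun lam _ lam' _ hne => Set.disjoint_left.2 fun α h h' =>
      hne (DFunLike.coe_injective (h.2.symm.trans h'.2))
  have hunion : ⋃ lam ∈ {lam | IsPartition n lam ∧ P lam}, fiber lam
      = {α | IsWeakComp n α ∧ P (ordFinsupp α)} := by
    ext α
    simp only [Set.mem_iUnion, Set.mem_ofPred_eq, fiber, exists_prop, ← ordFinsupp_eq_iff]
    constructor
    · rintro ⟨_, ⟨-, hP⟩, hα, rfl⟩
      exact ⟨hα, hP⟩
    · rintro ⟨hα, hP⟩
      exact ⟨_, ⟨isPartition_ordFinsupp hα, hP⟩, hα, rfl⟩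
  calc ∑' lam : {lam : ℕ →₀ ℕ // IsPartition n lam ∧ P lam}, ρ lam
      = ∑' lam : {lam | IsPartition n lam ∧ P lam}, ∑' α : fiber lam, π α :=
        tsum_congr fun lam => hρ lam lam.2.1
    _ = ∑' α : {α | IsWeakComp n α ∧ P (ordFinsupp α)}, π α := by
        rw [← ENNReal.tsum_biUnion' hdisj, hunion]

theorem stmt1_general (a : ℕ → ℝ) (ha : ∀ n, 0 < a n)
    (π : (n : ℕ) → (ℕ →₀ ℕ) → ENNReal)
    (hπ1 : ∀ n, 1 ≤ n → (∑' α : ℕ →₀ ℕ, π n α) = 1)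
    (ρ : (n : ℕ) → (ℕ →₀ ℕ) → ENNReal)
    (hρ : ∀ n lam, IsPartition n lam →
      ρ n lam = ∑' α : {α : ℕ →₀ ℕ // IsWeakComp n α ∧ ord α = ⇑lam}, π n α.1)
    (φ : ℝ → ℝ)
    (hφmono : ∀ x y : ℝ, 0 ≤ x → x ≤ y → φ y ≤ φ x)
    (h : ∀ ε : ℝ, 0 < ε →
      Tendsto (fun n => ∑' α : {α : ℕ →₀ ℕ // IsWeakComp n α ∧
          ∀ x : ℝ, 0 < x → |rescaledBdry n (a n) (⇑α) x - φ x| < ε}, π n α.1)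
        atTop (nhds 1)) :
    ∀ ε : ℝ, 0 < ε →
      Tendsto (fun n => ∑' lam : {lam : ℕ →₀ ℕ // IsPartition n lam ∧
          ∀ x : ℝ, 0 < x → |rescaledBdry n (a n) (⇑lam) x - φ x| < ε}, ρ n lam.1)
        atTop (nhds 1) := by
  intro ε hε
  have hφ : AntitoneOn φ (Set.Ioi 0) := fun x hx _ _ hxy => hφmono _ _ (le_of_lt hx) hxy
  refine (tendsto_congr fun n =>
    tsum_isPartition_eq_tsum_isWeakComp (hρ n) (BdryApprox n (a n) φ ε ⇑·)).2 ?_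
  refine tendsto_of_tendsto_of_tendsto_of_le_of_le' (h ε hε) tendsto_const_nhds ?_ ?_
  · refine Eventually.of_forall fun n => ENNReal.tsum_mono_subtype (π n) fun α hα => ?_
    exact ⟨hα.1, BdryApprox.ord (ha n) hφ hα.2⟩
  · filter_upwards [eventually_ge_atTop 1] with n hn
    exact (ENNReal.tsum_comp_le_tsum_of_injective Subtype.val_injective (π n)).trans (hπ1 n hn).le

theorem stmt1 (a : ℕ → ℝ) (ha : ∀ n, 0 < a n)
    (π : (n : ℕ) → (ℕ →₀ ℕ) → ENNReal)
    (hπsupp : ∀ n α, ¬ IsWeakComp n α → π n α = 0)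
    (hπ1 : ∀ n, 1 ≤ n → (∑' α : ℕ →₀ ℕ, π n α) = 1)
    (ρ : (n : ℕ) → (ℕ →₀ ℕ) → ENNReal)
    (hρ : ∀ n lam, IsPartition n lam →
      ρ n lam = ∑' α : {α : ℕ →₀ ℕ // IsWeakComp n α ∧ ord α = ⇑lam}, π n α.1)
    (hρsupp : ∀ n lam, ¬ IsPartition n lam → ρ n lam = 0)
    (φ : ℝ → ℝ) (hφ0 : ∀ x : ℝ, 0 ≤ x → 0 ≤ φ x)
    (hφmono : ∀ x y : ℝ, 0 ≤ x → x ≤ y → φ y ≤ φ x)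
    (hφrc : ∀ x : ℝ, 0 ≤ x → ContinuousWithinAt φ (Set.Ici x) x)
    (hφlim : Tendsto φ atTop (nhds 0))
    (h : ∀ ε : ℝ, 0 < ε →
      Tendsto (fun n => ∑' α : {α : ℕ →₀ ℕ // IsWeakComp n α ∧
          ∀ x : ℝ, 0 < x → |rescaledBdry n (a n) (⇑α) x - φ x| < ε}, π n α.1)
        atTop (nhds 1)) :
    ∀ ε : ℝ, 0 < ε →
      Tendsto (fun n => ∑' lam : {lam : ℕ →₀ ℕ // IsPartition n lam ∧
          ∀ x : ℝ, 0 < x → |rescaledBdry n (a n) (⇑lam) x - φ x| < ε}, ρ n lam.1)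
        atTop (nhds 1) :=
  stmt1_general a ha π hπ1 ρ hρ φ hφmono h
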